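/- arXiv:1412.5647 — 3 statements merged into one kernel-verified Lean document; each statement's English description precedes it below -/
import Mathlib

section
/- Fix N, T ≥ 1, vectors α ∈ ℝ^N, γ ∈ ℝ^T, a constant b > 0, and real numbers h_{it} for 1 ≤ i ≤ N, 1 ≤ t ≤ T. Define the symmetric (N+T) × (N+T) matrix H with blocks H_{(αα)} = diag( (1/√(NT)) Σ_t γ_t² h_{it} ) + (b/√(NT)) αα', H_{(αγ)}{it} = (1/√(NT)) α_i γ_t h_{it} - (b/√(NT)) α_i γ_t, and H_{(γγ)} = diag( (1/√(NT)) Σ_i α_i² h_{it} ) + (b/√(NT)) γγ'. Then the smallest eigenvalue of H satisfies λ_min(H) ≥ min{ min_i (1/√(NT)) Σ_t γ_t² (h_{it} - |h_{it} - b|), min_t (1/√(NT)) Σ_i α_i² (h_{it} - |h_{it} - b|) }. -/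
open Matrix

/-- Lower bound on the smallest eigenvalue of the (penalty-augmented) incidental
parameter Hessian `H`, stated via its quadratic form: for every vector `x`,
`xᵀHx ≥ min{minᵢ (1/√(NT)) ∑ₜ γₜ²(hᵢₜ - |hᵢₜ - b|), minₜ (1/√(NT)) ∑ᵢ αᵢ²(hᵢₜ - |hᵢₜ - b|)}·‖x‖²`. -/
theorem hessian_smallest_eigenvalue_bound
    {I 𝕋 : Type*} [Fintype I] [Fintype 𝕋] [Nonempty I] [Nonempty 𝕋]
    [DecidableEq I] [DecidableEq 𝕋]
    (α : I → ℝ) (γ : 𝕋 → ℝ) (b : ℝ) (hb : 0 < b) (h : I → 𝕋 → ℝ) :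
    let c : ℝ := Real.sqrt ((Fintype.card I : ℝ) * (Fintype.card 𝕋 : ℝ))
    let H : Matrix (I ⊕ 𝕋) (I ⊕ 𝕋) ℝ :=
      fromBlocks
        (Matrix.diagonal (fun i => c⁻¹ * ∑ t, γ t ^ 2 * h i t)
          + (b / c) • vecMulVec α α)
        (Matrix.of fun i t => c⁻¹ * α i * γ t * h i t - (b / c) * α i * γ t)
        (Matrix.of fun t i => c⁻¹ * α i * γ t * h i t - (b / c) * α i * γ t)
        (Matrix.diagonal (fun t => c⁻¹ * ∑ i, α i ^ 2 * h i t)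
          + (b / c) • vecMulVec γ γ)
    ∀ x : I ⊕ 𝕋 → ℝ,
      min (⨅ i, c⁻¹ * ∑ t, γ t ^ 2 * (h i t - |h i t - b|))
          (⨅ t, c⁻¹ * ∑ i, α i ^ 2 * (h i t - |h i t - b|)) * (∑ k, x k ^ 2)
        ≤ x ⬝ᵥ H.mulVec x := by
  intro c H x
  have hc : 0 < c := Real.sqrt_pos.mpr (by
    have h1 : (0:ℝ) < Fintype.card I := by exact_mod_cast Fintype.card_pos
    have h2 : (0:ℝ) < Fintype.card 𝕋 := by exact_mod_cast Fintype.card_pos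
    exact mul_pos h1 h2)
  set m : ℝ := min (⨅ i, c⁻¹ * ∑ t, γ t ^ 2 * (h i t - |h i t - b|))
      (⨅ t, c⁻¹ * ∑ i, α i ^ 2 * (h i t - |h i t - b|)) with hm
  -- the quadratic form decomposition
  have hQ : x ⬝ᵥ H.mulVec x
      = (∑ i, ∑ t, c⁻¹ * (h i t * (γ t * x (Sum.inl i))^2 + h i t * (α i * x (Sum.inr t))^2
          + ((h i t - b)*(α i * γ t)*(x (Sum.inl i) * x (Sum.inr t))
            + (h i t - b)*(α i * γ t)*(x (Sum.inl i) * x (Sum.inr t)))))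
        + (b/c) * ((∑ i, α i * x (Sum.inl i))^2 + (∑ t, γ t * x (Sum.inr t))^2) := by
    simp only [H]
    simp only [dotProduct, mulVec, Fintype.sum_sum_type, fromBlocks_apply₁₁,
      fromBlocks_apply₁₂, fromBlocks_apply₂₁, fromBlocks_apply₂₂,
      Matrix.add_apply, Matrix.smul_apply, vecMulVec_apply, of_apply,
      Matrix.diagonal_apply, smul_eq_mul, ite_mul, zero_mul, add_mul,
      Finset.sum_ite_eq, Finset.sum_ite_eq', mul_ite, mul_zero,
      Finset.mem_univ, if_true, Finset.sum_add_distrib,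
      Finset.mul_sum, Finset.sum_mul, mul_add, sq, sub_mul, mul_sub,
      Finset.sum_sub_distrib]
    rw [Finset.sum_comm (f := fun (t : 𝕋) (i : I) => x (Sum.inr t) * (c⁻¹ * α i * γ t * h i t * x (Sum.inl i))),
      Finset.sum_comm (f := fun (t : 𝕋) (i : I) => x (Sum.inr t) * (b / c * α i * γ t * x (Sum.inl i))),
      Finset.sum_comm (f := fun (t : 𝕋) (i : I) => x (Sum.inr t) * (c⁻¹ * (α i * α i * h i t) * x (Sum.inr t)))]
    simp only [div_eq_mul_inv, mul_comm, mul_assoc, mul_left_comm]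
    ring
  -- pointwise key inequality
  have hkey : ∀ i t,
      c⁻¹ * ((h i t - |h i t - b|) * ((γ t * x (Sum.inl i))^2 + (α i * x (Sum.inr t))^2))
      ≤ c⁻¹ * (h i t * (γ t * x (Sum.inl i))^2 + h i t * (α i * x (Sum.inr t))^2
          + ((h i t - b)*(α i * γ t)*(x (Sum.inl i) * x (Sum.inr t))
            + (h i t - b)*(α i * γ t)*(x (Sum.inl i) * x (Sum.inr t)))) := by
    intro i t
    apply mul_le_mul_of_nonneg_left ?_ (inv_nonneg.mpr hc.le)
    rcases abs_cases (h i t - b) with ⟨he, he2⟩ | ⟨he, he2⟩ <;> rw [he] <;>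
      nlinarith [mul_nonneg (abs_nonneg (h i t - b))
          (sq_nonneg (γ t * x (Sum.inl i) + α i * x (Sum.inr t))),
        mul_nonneg (abs_nonneg (h i t - b))
          (sq_nonneg (γ t * x (Sum.inl i) - α i * x (Sum.inr t))),
        sq_nonneg (γ t * x (Sum.inl i) + α i * x (Sum.inr t)),
        sq_nonneg (γ t * x (Sum.inl i) - α i * x (Sum.inr t))]
  -- the diagonal lower bound rewritten as a double sum
  have hsplit :
      (∑ i, (c⁻¹ * ∑ t, γ t ^ 2 * (h i t - |h i t - b|)) * x (Sum.inl i) ^ 2)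
      + (∑ t, (c⁻¹ * ∑ i, α i ^ 2 * (h i t - |h i t - b|)) * x (Sum.inr t) ^ 2)
      = ∑ i, ∑ t, c⁻¹ * ((h i t - |h i t - b|) * ((γ t * x (Sum.inl i))^2 + (α i * x (Sum.inr t))^2)) := by
    simp only [Finset.mul_sum, Finset.sum_mul]
    rw [Finset.sum_comm (f := fun (t : 𝕋) (i : I) =>
      c⁻¹ * (α i ^ 2 * (h i t - |h i t - b|)) * x (Sum.inr t) ^ 2)]
    rw [← Finset.sum_add_distrib]
    refine Finset.sum_congr rfl fun i _ => ?_
    rw [← Finset.sum_add_distrib]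
    exact Finset.sum_congr rfl fun t _ => by ring
  -- m is below each diagonal coefficient
  have hm1 : ∀ i, m ≤ c⁻¹ * ∑ t, γ t ^ 2 * (h i t - |h i t - b|) := fun i =>
    le_trans (min_le_left _ _) (ciInf_le (Set.finite_range _).bddBelow i)
  have hm2 : ∀ t, m ≤ c⁻¹ * ∑ i, α i ^ 2 * (h i t - |h i t - b|) := fun t =>
    le_trans (min_le_right _ _) (ciInf_le (Set.finite_range _).bddBelow t)
  calc m * (∑ k, x k ^ 2)
      = (∑ i, m * x (Sum.inl i) ^ 2) + (∑ t, m * x (Sum.inr t) ^ 2) := by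
        rw [Fintype.sum_sum_type, mul_add, Finset.mul_sum, Finset.mul_sum]
    _ ≤ (∑ i, (c⁻¹ * ∑ t, γ t ^ 2 * (h i t - |h i t - b|)) * x (Sum.inl i) ^ 2)
        + (∑ t, (c⁻¹ * ∑ i, α i ^ 2 * (h i t - |h i t - b|)) * x (Sum.inr t) ^ 2) := by
        gcongr with i _ t _
        · exact hm1 i
        · exact hm2 t
    _ = ∑ i, ∑ t, c⁻¹ * ((h i t - |h i t - b|) * ((γ t * x (Sum.inl i))^2 + (α i * x (Sum.inr t))^2)) := hsplit
    _ ≤ ∑ i, ∑ t, c⁻¹ * (h i t * (γ t * x (Sum.inl i))^2 + h i t * (α i * x (Sum.inr t))^2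
          + ((h i t - b)*(α i * γ t)*(x (Sum.inl i) * x (Sum.inr t))
            + (h i t - b)*(α i * γ t)*(x (Sum.inl i) * x (Sum.inr t)))) :=
        Finset.sum_le_sum fun i _ => Finset.sum_le_sum fun t _ => hkey i t
    _ ≤ _ + (b/c) * ((∑ i, α i * x (Sum.inl i))^2 + (∑ t, γ t * x (Sum.inr t))^2) := by
        have : 0 ≤ (b/c) * ((∑ i, α i * x (Sum.inl i))^2 + (∑ t, γ t * x (Sum.inr t))^2) := by
          positivity
        linarith
    _ = x ⬝ᵥ H.mulVec x := hQ.symm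
end

section
/- In the setting of the previous eigenvalue bound, if additionally h_{it} ≥ b for all i, t, then λ_min(H) ≥ min{ (b/√(NT)) Σ_t γ_t², (b/√(NT)) Σ_i α_i² }. In particular, if γ ≠ 0 and α ≠ 0 then H is positive definite. -/
open Matrix Finset

private lemma quad_id {I 𝕋 : Type*} [Fintype I] [Fintype 𝕋]
    (α : I → ℝ) (γ : 𝕋 → ℝ) (b c : ℝ) (h : I → 𝕋 → ℝ) (u : I → ℝ) (v : 𝕋 → ℝ) :
    (∑ i, u i * ((c⁻¹ * ∑ t, γ t ^ 2 * h i t) * u i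
        + ∑ j, b / c * (α i * α j) * u j
        + ∑ t, c⁻¹ * α i * γ t * (h i t - b) * v t))
      + (∑ t, v t * ((∑ i, c⁻¹ * α i * γ t * (h i t - b) * u i)
        + ((c⁻¹ * ∑ i, α i ^ 2 * h i t) * v t
        + ∑ s, b / c * (γ t * γ s) * v s)))
    = (∑ i, ∑ t, (c⁻¹ * (h i t - b) * (γ t * u i + α i * v t) ^ 2
        + b / c * (γ t ^ 2 * u i ^ 2) + b / c * (α i ^ 2 * v t ^ 2)))
      + b / c * (∑ i, α i * u i) ^ 2 + b / c * (∑ t, γ t * v t) ^ 2 := by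
  have e1 : ∀ i : I, u i * ((c⁻¹ * ∑ t, γ t ^ 2 * h i t) * u i
        + ∑ j, b / c * (α i * α j) * u j
        + ∑ t, c⁻¹ * α i * γ t * (h i t - b) * v t)
      = (∑ t, (c⁻¹ * γ t ^ 2 * h i t * u i ^ 2
          + c⁻¹ * α i * γ t * (h i t - b) * u i * v t))
        + b / c * (α i * u i) * (∑ j, α j * u j) := by
    intro i
    simp only [mul_add, Finset.mul_sum, Finset.sum_mul, Finset.sum_add_distrib]
    rw [add_right_comm]
    congr 1
    · congr 1
      · exact Finset.sum_congr rfl fun t _ => by ring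
      · exact Finset.sum_congr rfl fun t _ => by ring
    · exact Finset.sum_congr rfl fun j _ => by ring
  have e2 : ∀ t : 𝕋, v t * ((∑ i, c⁻¹ * α i * γ t * (h i t - b) * u i)
        + ((c⁻¹ * ∑ i, α i ^ 2 * h i t) * v t
        + ∑ s, b / c * (γ t * γ s) * v s))
      = (∑ i, (c⁻¹ * α i ^ 2 * h i t * v t ^ 2
          + c⁻¹ * α i * γ t * (h i t - b) * u i * v t))
        + b / c * (γ t * v t) * (∑ s, γ s * v s) := by
    intro t
    simp only [mul_add, Finset.mul_sum, Finset.sum_mul, Finset.sum_add_distrib]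
    have q1 : ∑ i : I, v t * (c⁻¹ * α i * γ t * (h i t - b) * u i)
        = ∑ x : I, c⁻¹ * α x * γ t * (h x t - b) * u x * v t :=
      Finset.sum_congr rfl fun _ _ => by ring
    have q2 : ∑ i : I, v t * (c⁻¹ * (α i ^ 2 * h i t) * v t)
        = ∑ x : I, c⁻¹ * α x ^ 2 * h x t * v t ^ 2 :=
      Finset.sum_congr rfl fun _ _ => by ring
    have q3 : ∑ i : 𝕋, v t * (b / c * (γ t * γ i) * v i)
        = ∑ i : 𝕋, b / c * (γ t * v t) * (γ i * v i) :=
      Finset.sum_congr rfl fun _ _ => by ring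
    rw [q1, q2, q3]; ring
  rw [Finset.sum_congr rfl fun i _ => e1 i, Finset.sum_congr rfl fun t _ => e2 t,
    Finset.sum_add_distrib, Finset.sum_add_distrib]
  have r1 : ∑ i, b / c * (α i * u i) * (∑ j, α j * u j)
      = b / c * (∑ i, α i * u i) ^ 2 := by
    rw [← Finset.sum_mul, ← Finset.mul_sum]; ring
  have r2 : ∑ t, b / c * (γ t * v t) * (∑ s, γ s * v s)
      = b / c * (∑ t, γ t * v t) ^ 2 := by
    rw [← Finset.sum_mul, ← Finset.mul_sum]; ring
  have r3 : (∑ t : 𝕋, ∑ i : I, (c⁻¹ * α i ^ 2 * h i t * v t ^ 2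
        + c⁻¹ * α i * γ t * (h i t - b) * u i * v t))
      = ∑ i : I, ∑ t : 𝕋, (c⁻¹ * α i ^ 2 * h i t * v t ^ 2
        + c⁻¹ * α i * γ t * (h i t - b) * u i * v t) := Finset.sum_comm
  rw [r1, r2, r3]
  have r4 : (∑ i : I, ∑ t : 𝕋, (c⁻¹ * γ t ^ 2 * h i t * u i ^ 2
          + c⁻¹ * α i * γ t * (h i t - b) * u i * v t))
      + ∑ i : I, ∑ t : 𝕋, (c⁻¹ * α i ^ 2 * h i t * v t ^ 2
          + c⁻¹ * α i * γ t * (h i t - b) * u i * v t)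
      = ∑ i, ∑ t, (c⁻¹ * (h i t - b) * (γ t * u i + α i * v t) ^ 2
        + b / c * (γ t ^ 2 * u i ^ 2) + b / c * (α i ^ 2 * v t ^ 2)) := by
    rw [← Finset.sum_add_distrib]
    refine Finset.sum_congr rfl fun i _ => ?_
    rw [← Finset.sum_add_distrib]
    exact Finset.sum_congr rfl fun t _ => by ring
  rw [← r4]; ring

private lemma helper2 {I 𝕋 : Type*} [Fintype I] [Fintype 𝕋] (d : ℝ) (p : I → ℝ) (q : 𝕋 → ℝ) :
    ∑ i, ∑ t, d * (p i * q t) = d * (∑ t, q t) * (∑ i, p i) := by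
  have e : ∀ i, ∑ t, d * (p i * q t) = d * (∑ t, q t) * p i := by
    intro i
    rw [Finset.mul_sum, Finset.sum_mul]
    exact Finset.sum_congr rfl fun t _ => by ring
  rw [Finset.sum_congr rfl fun i _ => e i, ← Finset.mul_sum]

/-- If additionally `hᵢₜ ≥ b` for all `i, t`, then
`λ_min(H) ≥ min{(b/√(NT)) ∑ₜ γₜ², (b/√(NT)) ∑ᵢ αᵢ²}` (stated via the quadratic
form), and if `γ ≠ 0` and `α ≠ 0` then `H` is positive definite. -/
theorem hessian_posdef_of_h_ge_b
    {I 𝕋 : Type*} [Fintype I] [Fintype 𝕋] [Nonempty I] [Nonempty 𝕋]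
    [DecidableEq I] [DecidableEq 𝕋]
    (α : I → ℝ) (γ : 𝕋 → ℝ) (b : ℝ) (hb : 0 < b) (h : I → 𝕋 → ℝ)
    (hhb : ∀ i t, b ≤ h i t) :
    let c : ℝ := Real.sqrt ((Fintype.card I : ℝ) * (Fintype.card 𝕋 : ℝ))
    let H : Matrix (I ⊕ 𝕋) (I ⊕ 𝕋) ℝ :=
      fromBlocks
        (Matrix.diagonal (fun i => c⁻¹ * ∑ t, γ t ^ 2 * h i t)
          + (b / c) • vecMulVec α α)
        (Matrix.of fun i t => c⁻¹ * α i * γ t * (h i t - b))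
        (Matrix.of fun t i => c⁻¹ * α i * γ t * (h i t - b))
        (Matrix.diagonal (fun t => c⁻¹ * ∑ i, α i ^ 2 * h i t)
          + (b / c) • vecMulVec γ γ)
    (∀ x : I ⊕ 𝕋 → ℝ,
      min ((b / c) * ∑ t, γ t ^ 2) ((b / c) * ∑ i, α i ^ 2) * (∑ k, x k ^ 2)
        ≤ x ⬝ᵥ H.mulVec x) ∧
    (γ ≠ 0 → α ≠ 0 → H.PosDef) := by
  intro c H
  have hcard : (0 : ℝ) < (Fintype.card I : ℝ) * (Fintype.card 𝕋 : ℝ) := by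
    have h1 : 0 < Fintype.card I := Fintype.card_pos
    have h2 : 0 < Fintype.card 𝕋 := Fintype.card_pos
    have h1' : (0 : ℝ) < (Fintype.card I : ℝ) := by exact_mod_cast h1
    have h2' : (0 : ℝ) < (Fintype.card 𝕋 : ℝ) := by exact_mod_cast h2
    exact mul_pos h1' h2'
  have hc : 0 < c := Real.sqrt_pos.mpr hcard
  have hbc : 0 < b / c := div_pos hb hc
  -- quadratic form identity
  have hquad : ∀ x : I ⊕ 𝕋 → ℝ, x ⬝ᵥ H.mulVec x
      = (∑ i, ∑ t, (c⁻¹ * (h i t - b)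
            * (γ t * x (Sum.inl i) + α i * x (Sum.inr t)) ^ 2
          + b / c * (γ t ^ 2 * x (Sum.inl i) ^ 2)
          + b / c * (α i ^ 2 * x (Sum.inr t) ^ 2)))
        + b / c * (∑ i, α i * x (Sum.inl i)) ^ 2
        + b / c * (∑ t, γ t * x (Sum.inr t)) ^ 2 := by
    intro x
    show x ⬝ᵥ (fromBlocks
        (Matrix.diagonal (fun i => c⁻¹ * ∑ t, γ t ^ 2 * h i t)
          + (b / c) • vecMulVec α α)
        (Matrix.of fun i t => c⁻¹ * α i * γ t * (h i t - b))
        (Matrix.of fun t i => c⁻¹ * α i * γ t * (h i t - b))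
        (Matrix.diagonal (fun t => c⁻¹ * ∑ i, α i ^ 2 * h i t)
          + (b / c) • vecMulVec γ γ)).mulVec x = _
    simp only [dotProduct, Matrix.mulVec, Fintype.sum_sum_type, fromBlocks_apply₁₁,
      fromBlocks_apply₁₂, fromBlocks_apply₂₁, fromBlocks_apply₂₂, Matrix.add_apply,
      Matrix.smul_apply, Matrix.diagonal_apply, vecMulVec_apply, Matrix.of_apply,
      smul_eq_mul, add_mul, ite_mul, zero_mul, Finset.sum_add_distrib,
      Finset.sum_ite_eq, Finset.mem_univ, if_true]
    rw [quad_id α γ b c h (fun i => x (Sum.inl i)) (fun t => x (Sum.inr t))]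
    simp only [Finset.sum_add_distrib]
  -- lower bound on the quadratic form
  have hlow : ∀ x : I ⊕ 𝕋 → ℝ,
      b / c * (∑ t, γ t ^ 2) * (∑ i, x (Sum.inl i) ^ 2)
        + b / c * (∑ i, α i ^ 2) * (∑ t, x (Sum.inr t) ^ 2)
      ≤ x ⬝ᵥ H.mulVec x := by
    intro x
    rw [hquad x]
    have hstep : ∑ i, ∑ t, (b / c * (γ t ^ 2 * x (Sum.inl i) ^ 2)
          + b / c * (α i ^ 2 * x (Sum.inr t) ^ 2))
        ≤ ∑ i, ∑ t, (c⁻¹ * (h i t - b)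
            * (γ t * x (Sum.inl i) + α i * x (Sum.inr t)) ^ 2
          + b / c * (γ t ^ 2 * x (Sum.inl i) ^ 2)
          + b / c * (α i ^ 2 * x (Sum.inr t) ^ 2)) := by
      refine Finset.sum_le_sum fun i _ => Finset.sum_le_sum fun t _ => ?_
      have hnn : 0 ≤ c⁻¹ * (h i t - b)
          * (γ t * x (Sum.inl i) + α i * x (Sum.inr t)) ^ 2 :=
        mul_nonneg (mul_nonneg (inv_nonneg.mpr hc.le)
          (sub_nonneg.mpr (hhb i t))) (sq_nonneg _)
      linarith
    have hsplit : ∑ i, ∑ t, (b / c * (γ t ^ 2 * x (Sum.inl i) ^ 2)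
          + b / c * (α i ^ 2 * x (Sum.inr t) ^ 2))
        = b / c * (∑ t, γ t ^ 2) * (∑ i, x (Sum.inl i) ^ 2)
          + b / c * (∑ i, α i ^ 2) * (∑ t, x (Sum.inr t) ^ 2) := by
      simp only [Finset.sum_add_distrib]
      have p1 : ∑ i : I, ∑ t : 𝕋, b / c * (γ t ^ 2 * x (Sum.inl i) ^ 2)
          = b / c * (∑ t, γ t ^ 2) * (∑ i, x (Sum.inl i) ^ 2) := by
        rw [Finset.sum_congr rfl fun i (_ : i ∈ univ) =>
          Finset.sum_congr rfl fun t _ =>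
            (by ring : b / c * (γ t ^ 2 * x (Sum.inl i) ^ 2)
              = b / c * (x (Sum.inl i) ^ 2 * γ t ^ 2))]
        exact helper2 (b / c) (fun i => x (Sum.inl i) ^ 2) (fun t => γ t ^ 2)
      have p2 : ∑ i : I, ∑ t : 𝕋, b / c * (α i ^ 2 * x (Sum.inr t) ^ 2)
          = b / c * (∑ i, α i ^ 2) * (∑ t, x (Sum.inr t) ^ 2) := by
        rw [helper2 (b / c) (fun i => α i ^ 2) (fun t => x (Sum.inr t) ^ 2)]
        ring
      rw [p1, p2]
    have h1 : 0 ≤ b / c * (∑ i, α i * x (Sum.inl i)) ^ 2 :=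
      mul_nonneg hbc.le (sq_nonneg _)
    have h2 : 0 ≤ b / c * (∑ t, γ t * x (Sum.inr t)) ^ 2 :=
      mul_nonneg hbc.le (sq_nonneg _)
    linarith [hsplit ▸ hstep]
  have main : ∀ x : I ⊕ 𝕋 → ℝ,
      min ((b / c) * ∑ t, γ t ^ 2) ((b / c) * ∑ i, α i ^ 2) * (∑ k, x k ^ 2)
        ≤ x ⬝ᵥ H.mulVec x := by
    intro x
    refine le_trans ?_ (hlow x)
    rw [Fintype.sum_sum_type (fun k => x k ^ 2), mul_add]
    exact add_le_add
      (mul_le_mul_of_nonneg_right (min_le_left _ _)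
        (Finset.sum_nonneg fun i _ => sq_nonneg _))
      (mul_le_mul_of_nonneg_right (min_le_right _ _)
        (Finset.sum_nonneg fun t _ => sq_nonneg _))
  refine ⟨main, fun hγ hα => ?_⟩
  refine Matrix.PosDef.of_dotProduct_mulVec_pos ?_ ?_
  · -- Hermitian
    show Hᴴ = H
    show (fromBlocks _ _ _ _)ᴴ = _
    rw [fromBlocks_conjTranspose]
    have hA : (Matrix.diagonal (fun i => c⁻¹ * ∑ t, γ t ^ 2 * h i t)
        + (b / c) • vecMulVec α α)ᴴ
        = Matrix.diagonal (fun i => c⁻¹ * ∑ t, γ t ^ 2 * h i t)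
          + (b / c) • vecMulVec α α := by
      ext i j
      simp only [Matrix.conjTranspose_apply, Matrix.add_apply, Matrix.diagonal_apply,
        Matrix.smul_apply, vecMulVec_apply, smul_eq_mul, star_trivial]
      rcases eq_or_ne i j with rfl | hij
      · ring
      · simp only [if_neg hij, if_neg (Ne.symm hij)]; ring
    have hD : (Matrix.diagonal (fun t => c⁻¹ * ∑ i, α i ^ 2 * h i t)
        + (b / c) • vecMulVec γ γ)ᴴ
        = Matrix.diagonal (fun t => c⁻¹ * ∑ i, α i ^ 2 * h i t)
          + (b / c) • vecMulVec γ γ := by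
      ext t s
      simp only [Matrix.conjTranspose_apply, Matrix.add_apply, Matrix.diagonal_apply,
        Matrix.smul_apply, vecMulVec_apply, smul_eq_mul, star_trivial]
      rcases eq_or_ne t s with rfl | hts
      · ring
      · simp only [if_neg hts, if_neg (Ne.symm hts)]; ring
    have hB : (Matrix.of fun i t => c⁻¹ * α i * γ t * (h i t - b))ᴴ
        = (Matrix.of fun t i => c⁻¹ * α i * γ t * (h i t - b)) := by
      ext t i
      simp [Matrix.conjTranspose_apply]
    have hC : (Matrix.of fun t i => c⁻¹ * α i * γ t * (h i t - b))ᴴ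
        = (Matrix.of fun i t => c⁻¹ * α i * γ t * (h i t - b)) := by
      ext i t
      simp [Matrix.conjTranspose_apply]
    rw [hA, hD, hB, hC]
  · -- positivity
    intro x hx
    have hxx : star x = x := by simp
    rw [hxx]
    have hm : 0 < min ((b / c) * ∑ t, γ t ^ 2) ((b / c) * ∑ i, α i ^ 2) := by
      rcases Function.ne_iff.mp hγ with ⟨t0, ht0⟩
      rcases Function.ne_iff.mp hα with ⟨i0, hi0⟩
      refine lt_min (mul_pos hbc ?_) (mul_pos hbc ?_)
      · exact Finset.sum_pos' (fun t _ => sq_nonneg _)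
          ⟨t0, Finset.mem_univ t0, pow_two_pos_of_ne_zero ht0⟩
      · exact Finset.sum_pos' (fun i _ => sq_nonneg _)
          ⟨i0, Finset.mem_univ i0, pow_two_pos_of_ne_zero hi0⟩
    have hxs : 0 < ∑ k, x k ^ 2 := by
      rcases Function.ne_iff.mp hx with ⟨k0, hk0⟩
      exact Finset.sum_pos' (fun k _ => sq_nonneg _)
        ⟨k0, Finset.mem_univ k0, pow_two_pos_of_ne_zero hk0⟩
    calc (0 : ℝ) < _ * _ := mul_pos hm hxs
      _ ≤ x ⬝ᵥ H.mulVec x := main x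
end

section
/- Let h_{it} satisfy 0 < b_min ≤ h_{it} ≤ b_max for all 1 ≤ i ≤ N, 1 ≤ t ≤ T, let α ∈ ℝ^N, γ ∈ ℝ^T with Σ_j α_j² = Σ_τ γ_τ² > 0, and let 0 < b ≤ b_min·(1 + b_max/b_min)⁻¹. Define h̃_{it} := (h_{it} - b) - [ (b⁻¹ + Σ_j α_j² (Σ_τ γ_τ² h_{jτ})⁻¹)⁻¹ ] · Σ_j α_j² (h_{jt} - b)/(Σ_τ γ_τ² h_{jτ}). Then h̃_{it} > 0 and max_i ( Σ_t γ_t² h̃_{it} / Σ_t γ_t² h_{it} ) < 1 - b/b_max. -/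
set_option maxHeartbeats 1000000 in
/-- Key estimate of Lemma (HH): with `0 < b_min ≤ hᵢₜ ≤ b_max`,
`∑ⱼ αⱼ² = ∑_τ γ_τ² > 0`, and `0 < b ≤ b_min (1 + b_max/b_min)⁻¹`, the quantities
`h̃ᵢₜ = (hᵢₜ - b) - (b⁻¹ + ∑ⱼ αⱼ²(∑_τ γ_τ² h_{jτ})⁻¹)⁻¹ ∑ⱼ αⱼ²(h_{jt} - b)/(∑_τ γ_τ² h_{jτ})`
are strictly positive and `maxᵢ (∑ₜ γₜ² h̃ᵢₜ)/(∑ₜ γₜ² hᵢₜ) < 1 - b/b_max`. -/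
theorem lemma_HH_bound
    {I 𝕋 : Type*} [Fintype I] [Fintype 𝕋] [Nonempty I] [Nonempty 𝕋]
    (α : I → ℝ) (γ : 𝕋 → ℝ) (h : I → 𝕋 → ℝ) (bmin bmax b : ℝ)
    (hbmin : 0 < bmin)
    (hbounds : ∀ i t, bmin ≤ h i t ∧ h i t ≤ bmax)
    (hnorm : ∑ j, α j ^ 2 = ∑ τ, γ τ ^ 2)
    (hpos : 0 < ∑ τ, γ τ ^ 2)
    (hb : 0 < b) (hble : b ≤ bmin * (1 + bmax / bmin)⁻¹) :
    let htilde : I → 𝕋 → ℝ := fun i t =>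
      (h i t - b) -
        (b⁻¹ + ∑ j, α j ^ 2 * (∑ τ, γ τ ^ 2 * h j τ)⁻¹)⁻¹ *
          ∑ j, α j ^ 2 * (h j t - b) / (∑ τ, γ τ ^ 2 * h j τ)
    (∀ i t, 0 < htilde i t) ∧
    (∀ i, (∑ t, γ t ^ 2 * htilde i t) / (∑ t, γ t ^ 2 * h i t)
        < 1 - b / bmax) := by
  intro htilde
  obtain ⟨i0⟩ := ‹Nonempty I›
  obtain ⟨t0⟩ := ‹Nonempty 𝕋›
  have hminmax : bmin ≤ bmax := le_trans (hbounds i0 t0).1 (hbounds i0 t0).2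
  have hbmax : (0:ℝ) < bmax := lt_of_lt_of_le hbmin hminmax
  have hbmin0 : bmin ≠ 0 := ne_of_gt hbmin
  have hs : (0:ℝ) < bmin + bmax := by linarith
  have hblt : b < bmin := by
    have h1 : (1:ℝ) < 1 + bmax / bmin := by
      have : 0 < bmax / bmin := by positivity
      linarith
    have h2 : (1 + bmax / bmin)⁻¹ < 1 := by
      rw [inv_lt_one_iff₀]; right; exact h1
    nlinarith
  have hkey : b * (bmin + bmax) ≤ bmin ^ 2 := by
    have heq : bmin * (1 + bmax / bmin)⁻¹ = bmin ^ 2 / (bmin + bmax) := by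
      field_simp
    rw [heq, le_div_iff₀ hs] at hble
    linarith
  set Sγ : ℝ := ∑ τ, γ τ ^ 2 with hSγdef
  set S : I → ℝ := fun j => ∑ τ, γ τ ^ 2 * h j τ with hSdef
  have hSlow : ∀ j, bmin * Sγ ≤ S j := by
    intro j
    rw [hSdef, hSγdef, Finset.mul_sum]
    refine Finset.sum_le_sum fun t _ => ?_
    have := (hbounds j t).1
    nlinarith [sq_nonneg (γ t)]
  have hSup : ∀ j, S j ≤ bmax * Sγ := by
    intro j
    rw [hSdef, hSγdef, Finset.mul_sum]
    refine Finset.sum_le_sum fun t _ => ?_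
    have := (hbounds j t).2
    nlinarith [sq_nonneg (γ t)]
  have hSpos : ∀ j, 0 < S j := fun j =>
    lt_of_lt_of_le (by positivity) (hSlow j)
  set E : ℝ := ∑ j, α j ^ 2 * (S j)⁻¹ with hEdef
  have hEnonneg : 0 ≤ E := by
    rw [hEdef]
    refine Finset.sum_nonneg fun j _ => ?_
    have := hSpos j
    positivity
  have hEle : E ≤ bmin⁻¹ := by
    have h1 : E ≤ ∑ j, α j ^ 2 * (bmin * Sγ)⁻¹ := by
      rw [hEdef]
      refine Finset.sum_le_sum fun j _ => ?_
      have hinv : (S j)⁻¹ ≤ (bmin * Sγ)⁻¹ := by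
        apply inv_anti₀ (by positivity) (hSlow j)
      nlinarith [sq_nonneg (α j)]
    have h2 : ∑ j, α j ^ 2 * (bmin * Sγ)⁻¹ = bmin⁻¹ := by
      rw [← Finset.sum_mul, hnorm, mul_inv]
      field_simp
    linarith
  set D : ℝ := b⁻¹ + E with hDdef
  have hDpos : 0 < D := by
    have h0 : 0 < b⁻¹ := by positivity
    rw [hDdef]
    linarith
  set c : ℝ := D⁻¹ with hcdef
  have hcpos : 0 < c := inv_pos.mpr hDpos
  have hcD : c * D = 1 := inv_mul_cancel₀ (ne_of_gt hDpos)
  have hbinv : b * b⁻¹ = 1 := mul_inv_cancel₀ (ne_of_gt hb)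
  have hcleb : c ≤ b := by
    have h1 : b⁻¹ ≤ D := by rw [hDdef]; linarith
    have h2 : c * b⁻¹ ≤ 1 := by
      calc c * b⁻¹ ≤ c * D := mul_le_mul_of_nonneg_left h1 hcpos.le
        _ = 1 := hcD
    have h3 : b * (c * b⁻¹) ≤ b * 1 := mul_le_mul_of_nonneg_left h2 hb.le
    have h4 : b * (c * b⁻¹) = c := by
      field_simp
    linarith
  have hcgt : b / 2 < c := by
    have hbb : bmin⁻¹ < b⁻¹ := by
      apply inv_strictAnti₀ hb hblt
    have hD2 : D < 2 * b⁻¹ := by rw [hDdef]; linarith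
    have h2 : 1 < c * (2 * b⁻¹) := by
      calc (1:ℝ) = c * D := hcD.symm
        _ < c * (2 * b⁻¹) := mul_lt_mul_of_pos_left hD2 hcpos
    have h3 : 1 * b < c * (2 * b⁻¹) * b := mul_lt_mul_of_pos_right h2 hb
    have h4 : c * (2 * b⁻¹) * b = 2 * c := by
      field_simp
    linarith
  -- bounds on T t
  have hTnn : ∀ t, 0 ≤ ∑ j, α j ^ 2 * (h j t - b) / S j := by
    intro t
    refine Finset.sum_nonneg fun j _ => ?_
    have h1 := (hbounds j t).1
    have h2 := hSpos j
    apply div_nonneg _ h2.le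
    nlinarith [sq_nonneg (α j)]
  have hTle : ∀ t, ∑ j, α j ^ 2 * (h j t - b) / S j ≤ (bmax - b) / bmin := by
    intro t
    have h1 : ∑ j, α j ^ 2 * (h j t - b) / S j
        ≤ ∑ j, α j ^ 2 * ((bmax - b) / (bmin * Sγ)) := by
      refine Finset.sum_le_sum fun j _ => ?_
      rw [mul_div_assoc]
      refine mul_le_mul_of_nonneg_left ?_ (sq_nonneg (α j))
      rw [div_le_div_iff₀ (hSpos j) (by positivity)]
      have h2 := (hbounds j t).2
      have h3 := hSlow j
      have p1 : 0 ≤ (bmax - h j t) * (bmin * Sγ) :=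
        mul_nonneg (by linarith) (by positivity)
      have p2 : 0 ≤ (bmax - b) * (S j - bmin * Sγ) :=
        mul_nonneg (by linarith) (by linarith)
      nlinarith [p1, p2]
    have h2 : ∑ j, α j ^ 2 * ((bmax - b) / (bmin * Sγ)) = (bmax - b) / bmin := by
      rw [← Finset.sum_mul, hnorm]
      have : Sγ ≠ 0 := ne_of_gt hpos
      field_simp
    linarith
  have hdef : ∀ i t, htilde i t
      = (h i t - b) - c * ∑ j, α j ^ 2 * (h j t - b) / S j := fun _ _ => rfl
  have hpos1 : ∀ i t, 0 < htilde i t := by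
    intro i t
    rw [hdef]
    have hT1 := hTnn t
    have hT2 := hTle t
    have h1 : c * (∑ j, α j ^ 2 * (h j t - b) / S j) ≤ b * ((bmax - b) / bmin) :=
      le_trans (mul_le_mul_of_nonneg_right hcleb hT1)
        (mul_le_mul_of_nonneg_left hT2 hb.le)
    have h2 : bmin ≤ h i t := (hbounds i t).1
    have h5 : b * ((bmax - b) / bmin) < bmin - b := by
      rw [show b * ((bmax - b) / bmin) = b * (bmax - b) / bmin by ring,
        div_lt_iff₀ hbmin]
      nlinarith [mul_pos hb hb]
    linarith
  -- sum identity
  have hsplit : ∀ j, ∑ t, γ t ^ 2 * (h j t - b) = S j - b * Sγ := by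
    intro j
    simp only [hSdef, hSγdef]
    rw [Finset.mul_sum, ← Finset.sum_sub_distrib]
    exact Finset.sum_congr rfl fun t _ => by ring
  have hsum2 : ∀ i, ∑ t, γ t ^ 2 * htilde i t = S i - 2 * c * Sγ := by
    intro i
    have e1 : ∑ t, γ t ^ 2 * htilde i t
        = (∑ t, γ t ^ 2 * (h i t - b))
          - c * ∑ t, γ t ^ 2 * (∑ j, α j ^ 2 * (h j t - b) / S j) := by
      rw [Finset.mul_sum, ← Finset.sum_sub_distrib]
      refine Finset.sum_congr rfl fun t _ => ?_
      rw [hdef]; ring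
    have e2 : ∑ t, γ t ^ 2 * (∑ j, α j ^ 2 * (h j t - b) / S j)
        = ∑ j, (α j ^ 2 / S j) * (S j - b * Sγ) := by
      simp_rw [Finset.mul_sum]
      rw [Finset.sum_comm]
      refine Finset.sum_congr rfl fun j _ => ?_
      rw [← hsplit j, Finset.mul_sum]
      exact Finset.sum_congr rfl fun t _ => by ring
    have e3 : ∑ j, (α j ^ 2 / S j) * (S j - b * Sγ) = Sγ - b * Sγ * E := by
      have hterm : ∀ j ∈ Finset.univ, (α j ^ 2 / S j) * (S j - b * Sγ)
          = α j ^ 2 - b * Sγ * (α j ^ 2 * (S j)⁻¹) := by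
        intro j _
        have hne := (hSpos j).ne'
        field_simp
      rw [Finset.sum_congr rfl hterm, Finset.sum_sub_distrib, ← Finset.mul_sum,
        ← hEdef, hnorm]
    rw [e1, e2, e3, hsplit i]
    have hfin : c * (Sγ - b * Sγ * E) = 2 * c * Sγ - b * Sγ := by
      have hE' : E = D - b⁻¹ := by rw [hDdef]; ring
      rw [hE']
      linear_combination (-(b * Sγ)) * hcD + (c * Sγ) * hbinv
    rw [hfin]; ring
  refine ⟨hpos1, fun i => ?_⟩
  have hgoal : (S i - 2 * c * Sγ) / S i < 1 - b / bmax := by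
    rw [div_lt_iff₀ (hSpos i)]
    have hbb : b / bmax * bmax = b := div_mul_cancel₀ b (ne_of_gt hbmax)
    have hx : 0 ≤ b / bmax := by positivity
    nlinarith [mul_le_mul_of_nonneg_left (hSup i) hx,
      mul_lt_mul_of_pos_right hcgt hpos]
  calc (∑ t, γ t ^ 2 * htilde i t) / (∑ t, γ t ^ 2 * h i t)
      = (S i - 2 * c * Sγ) / S i := by rw [hsum2 i]
    _ < 1 - b / bmax := hgoal
end
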